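/- The Lebesgue measure of K_l is at most 1: λ(K_l) ≤ 1. -/
import Mathlib

open MeasureTheory Finset

def Tl (l : ℕ) : Set ℕ :=
  {d | (Even d ∧ d ≤ 2 * l) ∨ (Odd d ∧ 2 * l + 1 ≤ d ∧ d ≤ 4 * l + 1)}

def Kl (l : ℕ) : Set ℝ :=
  {x | ∃ ε : ℕ → ℕ, (∀ i, ε i ∈ Tl l) ∧
    x = ∑' i : ℕ, (ε i : ℝ) / (2 * l + 2) ^ (i + 1)}

/-- even digits 0,2,...,2l -/
def Ed (l : ℕ) : Finset ℤ := (Finset.range (l+1)).image (fun j : ℕ => 2*(j:ℤ))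
/-- odd digits 2l+1, ..., 4l+1 -/
def Od (l : ℕ) : Finset ℤ := (Finset.range (l+1)).image (fun j : ℕ => 2*(l:ℤ)+1+2*(j:ℤ))
def Dz (l : ℕ) : Finset ℤ := Ed l ∪ Od l

def Vd (l : ℕ) : ℕ → Finset ℤ
  | 0 => {0}
  | (n+1) => ((Vd l n) ×ˢ (Dz l)).image (fun p => (2*l+2) * p.1 + p.2)

noncomputable def Pd (l n : ℕ) : Finset ℤ := (Vd l n).filter (fun N => N+1 ∉ Vd l n)
noncomputable def Qd (l n : ℕ) : Finset ℤ := (Vd l n).filter (fun N => N-1 ∉ Vd l n)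

lemma mem_Ed {l : ℕ} {d : ℤ} : d ∈ Ed l ↔ ∃ j : ℕ, j ≤ l ∧ d = 2*j := by
  simp [Ed, Nat.lt_succ_iff]
  exact ⟨fun ⟨j,h1,h2⟩ => ⟨j,h1,h2.symm⟩, fun ⟨j,h1,h2⟩ => ⟨j,h1,h2.symm⟩⟩

lemma mem_Od {l : ℕ} {d : ℤ} : d ∈ Od l ↔ ∃ j : ℕ, j ≤ l ∧ d = 2*(l:ℤ)+1+2*j := by
  simp [Od, Nat.lt_succ_iff]
  exact ⟨fun ⟨j,h1,h2⟩ => ⟨j,h1,h2.symm⟩, fun ⟨j,h1,h2⟩ => ⟨j,h1,h2.symm⟩⟩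

lemma card_Ed (l : ℕ) : (Ed l).card = l + 1 := by
  rw [Ed, Finset.card_image_of_injective _ (fun a b h => by omega), Finset.card_range]

lemma card_Od (l : ℕ) : (Od l).card = l + 1 := by
  rw [Od, Finset.card_image_of_injective _ (fun a b h => by omega), Finset.card_range]

lemma card_Dz (l : ℕ) : (Dz l).card ≤ 2*l + 2 := by
  calc (Dz l).card ≤ (Ed l).card + (Od l).card := Finset.card_union_le _ _
  _ = 2*l+2 := by rw [card_Ed, card_Od]; ring

lemma mem_Vd_succ {l n : ℕ} {z : ℤ} :
    z ∈ Vd l (n+1) ↔ ∃ N ∈ Vd l n, ∃ d ∈ Dz l, z = (2*l+2) * N + d := by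
  simp only [Vd, Finset.mem_image, Finset.mem_product, Prod.exists]
  constructor
  · rintro ⟨a, b, ⟨h1, h2⟩, rfl⟩; exact ⟨a, h1, b, h2, rfl⟩
  · rintro ⟨a, h1, b, h2, rfl⟩; exact ⟨a, b, ⟨h1, h2⟩, rfl⟩

lemma card_Vd (l n : ℕ) : (Vd l n).card ≤ (2*l+2)^n := by
  induction n with
  | zero => simp [Vd]
  | succ n ih =>
    calc (Vd l (n+1)).card ≤ ((Vd l n) ×ˢ (Dz l)).card := Finset.card_image_le
    _ = (Vd l n).card * (Dz l).card := Finset.card_product _ _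
    _ ≤ (2*l+2)^n * (2*l+2) := Nat.mul_le_mul ih (card_Dz l)
    _ = (2*l+2)^(n+1) := by ring

def Edm (l : ℕ) : Finset ℤ := (Finset.range l).image (fun j : ℕ => 2*(j:ℤ))
def Odm (l : ℕ) : Finset ℤ := (Finset.range l).image (fun j : ℕ => 2*(l:ℤ)+3+2*(j:ℤ))

lemma card_Edm (l : ℕ) : (Edm l).card = l := by
  rw [Edm, Finset.card_image_of_injective _ (fun a b h => by omega), Finset.card_range]

lemma card_Odm (l : ℕ) : (Odm l).card = l := by
  rw [Odm, Finset.card_image_of_injective _ (fun a b h => by omega), Finset.card_range]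

lemma P_succ_subset (l n : ℕ) : Pd l (n+1) ⊆
    ((Qd l n ×ˢ Edm l) ∪ (Pd l n ×ˢ Od l)).image (fun p => (2*(l:ℤ)+2) * p.1 + p.2) := by
  intro z hz
  simp only [Pd, Finset.mem_filter] at hz
  obtain ⟨hzV, hz1⟩ := hz
  rw [mem_Vd_succ] at hzV
  obtain ⟨N, hN, d, hd, rfl⟩ := hzV
  rw [Finset.mem_image]
  rcases Finset.mem_union.1 hd with hE | hO
  · obtain ⟨j, hj, rfl⟩ := mem_Ed.1 hE
    by_cases hjl : j = l
    · exfalso; apply hz1; rw [mem_Vd_succ]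
      refine ⟨N, hN, 2*(l:ℤ)+1, Finset.mem_union_right _ (mem_Od.2 ⟨0, by omega, by push_cast; ring⟩), ?_⟩
      subst hjl; push_cast; ring
    · have hN1 : N - 1 ∉ Vd l n := by
        intro hmem; apply hz1; rw [mem_Vd_succ]
        refine ⟨N-1, hmem, 2*(l:ℤ)+1+2*((j:ℤ)+1),
          Finset.mem_union_right _ (mem_Od.2 ⟨j+1, by omega, by push_cast; ring⟩), ?_⟩
        push_cast; ring
      refine ⟨(N, 2*(j:ℤ)), Finset.mem_union_left _ (Finset.mem_product.2
        ⟨Finset.mem_filter.2 ⟨hN, hN1⟩, ?_⟩), rfl⟩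
      simp only [Edm, Finset.mem_image]
      exact ⟨j, Finset.mem_range.2 (by omega), rfl⟩
  · obtain ⟨j, hj, rfl⟩ := mem_Od.1 hO
    have hN1 : N + 1 ∉ Vd l n := by
      intro hmem; apply hz1; rw [mem_Vd_succ]
      refine ⟨N+1, hmem, 2*(j:ℤ),
        Finset.mem_union_left _ (mem_Ed.2 ⟨j, hj, rfl⟩), ?_⟩
      push_cast; ring
    exact ⟨(N, 2*(l:ℤ)+1+2*(j:ℤ)), Finset.mem_union_right _ (Finset.mem_product.2
      ⟨Finset.mem_filter.2 ⟨hN, hN1⟩, mem_Od.2 ⟨j, hj, rfl⟩⟩), rfl⟩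

lemma Q_succ_subset (l n : ℕ) : Qd l (n+1) ⊆
    ((Qd l n ×ˢ Ed l) ∪ (Pd l n ×ˢ Odm l)).image (fun p => (2*(l:ℤ)+2) * p.1 + p.2) := by
  intro z hz
  simp only [Qd, Finset.mem_filter] at hz
  obtain ⟨hzV, hz1⟩ := hz
  rw [mem_Vd_succ] at hzV
  obtain ⟨N, hN, d, hd, rfl⟩ := hzV
  rw [Finset.mem_image]
  rcases Finset.mem_union.1 hd with hE | hO
  · obtain ⟨j, hj, rfl⟩ := mem_Ed.1 hE
    have hN1 : N - 1 ∉ Vd l n := by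
      intro hmem; apply hz1; rw [mem_Vd_succ]
      refine ⟨N-1, hmem, 2*(l:ℤ)+1+2*(j:ℤ),
        Finset.mem_union_right _ (mem_Od.2 ⟨j, hj, rfl⟩), ?_⟩
      push_cast; ring
    exact ⟨(N, 2*(j:ℤ)), Finset.mem_union_left _ (Finset.mem_product.2
      ⟨Finset.mem_filter.2 ⟨hN, hN1⟩, mem_Ed.2 ⟨j, hj, rfl⟩⟩), rfl⟩
  · obtain ⟨j, hj, rfl⟩ := mem_Od.1 hO
    by_cases hj0 : j = 0
    · exfalso; apply hz1; rw [mem_Vd_succ]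
      refine ⟨N, hN, 2*(l:ℤ), Finset.mem_union_left _ (mem_Ed.2 ⟨l, le_refl l, rfl⟩), ?_⟩
      subst hj0; push_cast; ring
    · have hN1 : N + 1 ∉ Vd l n := by
        intro hmem; apply hz1; rw [mem_Vd_succ]
        refine ⟨N+1, hmem, 2*((j:ℤ)-1),
          Finset.mem_union_left _ (mem_Ed.2 ⟨j-1, by omega, by push_cast [Nat.cast_sub (by omega : 1 ≤ j)]; ring⟩), ?_⟩
        push_cast; ring
      refine ⟨(N, 2*(l:ℤ)+1+2*(j:ℤ)), Finset.mem_union_right _ (Finset.mem_product.2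
        ⟨Finset.mem_filter.2 ⟨hN, hN1⟩, ?_⟩), rfl⟩
      simp only [Odm, Finset.mem_image]
      exact ⟨j-1, Finset.mem_range.2 (by omega), by push_cast [Nat.cast_sub (by omega : 1 ≤ j)]; ring⟩

/-- the carry bound -/
lemma card_PQ (l : ℕ) (n : ℕ) :
    (Pd l n).card + (Qd l n).card ≤ 2 * (2*l+1)^n := by
  induction n with
  | zero =>
    have h1 : (Pd l 0).card ≤ 1 := le_trans (Finset.card_filter_le _ _) (by simp [Vd])
    have h2 : (Qd l 0).card ≤ 1 := le_trans (Finset.card_filter_le _ _) (by simp [Vd])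
    simpa using Nat.add_le_add h1 h2
  | succ n ih =>
    have hP : (Pd l (n+1)).card ≤ (Qd l n).card * l + (Pd l n).card * (l+1) := by
      calc (Pd l (n+1)).card ≤ ((Qd l n ×ˢ Edm l) ∪ (Pd l n ×ˢ Od l)).card :=
            le_trans (Finset.card_le_card (P_succ_subset l n)) Finset.card_image_le
      _ ≤ (Qd l n ×ˢ Edm l).card + (Pd l n ×ˢ Od l).card := Finset.card_union_le _ _
      _ = (Qd l n).card * l + (Pd l n).card * (l+1) := by
          rw [Finset.card_product, Finset.card_product, card_Edm, card_Od]
    have hQ : (Qd l (n+1)).card ≤ (Qd l n).card * (l+1) + (Pd l n).card * l := by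
      calc (Qd l (n+1)).card ≤ ((Qd l n ×ˢ Ed l) ∪ (Pd l n ×ˢ Odm l)).card :=
            le_trans (Finset.card_le_card (Q_succ_subset l n)) Finset.card_image_le
      _ ≤ (Qd l n ×ˢ Ed l).card + (Pd l n ×ˢ Odm l).card := Finset.card_union_le _ _
      _ = (Qd l n).card * (l+1) + (Pd l n).card * l := by
          rw [Finset.card_product, Finset.card_product, card_Ed, card_Odm]
    calc (Pd l (n+1)).card + (Qd l (n+1)).card
        ≤ ((Qd l n).card * l + (Pd l n).card * (l+1)) + ((Qd l n).card * (l+1) + (Pd l n).card * l) :=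
          Nat.add_le_add hP hQ
      _ = ((Pd l n).card + (Qd l n).card) * (2*l+1) := by ring
      _ ≤ 2 * (2*l+1)^n * (2*l+1) := Nat.mul_le_mul_right _ ih
      _ = 2 * (2*l+1)^(n+1) := by ring

lemma mem_Dz_of_Tl {l d : ℕ} (h : d ∈ Tl l) : (d : ℤ) ∈ Dz l := by
  rcases h with ⟨⟨j, hj⟩, hle⟩ | ⟨⟨j, hj⟩, h1, h2⟩
  · apply Finset.mem_union_left
    rw [mem_Ed]
    exact ⟨j, by omega, by push_cast; omega⟩
  · apply Finset.mem_union_right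
    rw [mem_Od]
    exact ⟨j - l, by omega, by push_cast [Nat.cast_sub (by omega : l ≤ j)]; omega⟩

lemma head_mem_Vd (l : ℕ) (ε : ℕ → ℕ) (hε : ∀ i, ε i ∈ Tl l) (n : ℕ) :
    ∑ i ∈ range n, (ε i : ℤ) * (2*l+2)^(n-1-i) ∈ Vd l n := by
  induction n with
  | zero => simp [Vd]
  | succ n ih =>
    rw [Finset.sum_range_succ]
    rw [mem_Vd_succ]
    refine ⟨∑ i ∈ range n, (ε i : ℤ) * (2*l+2)^(n-1-i), ih, (ε n : ℤ), mem_Dz_of_Tl (hε n), ?_⟩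
    rw [Finset.mul_sum]
    have : ∀ i ∈ range n, (ε i : ℤ) * (2*l+2)^(n+1-1-i) = (2*l+2) * ((ε i : ℤ) * (2*l+2)^(n-1-i)) := by
      intro i hi
      rw [Finset.mem_range] at hi
      have : n+1-1-i = (n-1-i)+1 := by omega
      rw [this, pow_succ]
      ring
    rw [Finset.sum_congr rfl this]
    simp

lemma summable_aux (l : ℕ) (ε : ℕ → ℕ) (hε : ∀ i, ε i ∈ Tl l) :
    Summable (fun i : ℕ => (ε i : ℝ) / (2 * l + 2) ^ (i + 1)) := by
  have hb : (1:ℝ) < 2*l+2 := by have : (0:ℝ) ≤ (l:ℝ) := Nat.cast_nonneg l; linarith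
  have hbound : ∀ i, ε i ≤ 4*l+1 := by
    intro i; rcases hε i with ⟨_, h⟩ | ⟨_, _, h⟩ <;> omega
  have hg : Summable (fun i : ℕ => (4*(l:ℝ)+1) * ((2*(l:ℝ)+2)⁻¹)^i) := by
    apply Summable.mul_left
    apply summable_geometric_of_lt_one (by positivity)
    rw [inv_lt_one_iff₀]
    right
    linarith
  refine Summable.of_nonneg_of_le (fun i => by positivity) (fun i => ?_) hg
  rw [div_eq_mul_inv, ← inv_pow]
  have h1 : (ε i : ℝ) ≤ 4*l+1 := by exact_mod_cast hbound i
  have h2 : ((2*(l:ℝ)+2)⁻¹)^(i+1) ≤ ((2*(l:ℝ)+2)⁻¹)^i := by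
    apply pow_le_pow_of_le_one (by positivity) _ (by omega)
    rw [inv_le_one_iff₀]
    right
    linarith
  exact mul_le_mul h1 h2 (by positivity) (by positivity)

lemma head_eq (l n : ℕ) (ε : ℕ → ℕ) :
    ∑ i ∈ range n, (ε i : ℝ) / (2 * l + 2) ^ (i + 1)
      = (((∑ i ∈ range n, (ε i : ℤ) * (2*l+2)^(n-1-i)) : ℤ) : ℝ) / (2 * l + 2) ^ n := by
  have hb : (0:ℝ) < 2*l+2 := by positivity
  push_cast
  rw [Finset.sum_div]
  apply Finset.sum_congr rfl
  intro i hi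
  rw [Finset.mem_range] at hi
  rw [div_eq_div_iff (by positivity) (by positivity), mul_assoc, ← pow_add]
  congr 2
  omega

lemma tail_bound (l : ℕ) (hl : 1 ≤ l) (ε : ℕ → ℕ) (hε : ∀ i, ε i ∈ Tl l) (n : ℕ) :
    ∑' i : ℕ, (ε (i + n) : ℝ) / (2 * l + 2) ^ ((i + n) + 1) ≤ 2 / (2 * l + 2) ^ n := by
  have hb : (1:ℝ) < 2*l+2 := by have : (0:ℝ) ≤ (l:ℝ) := Nat.cast_nonneg l; linarith
  have hbound : ∀ i, (ε i : ℝ) ≤ 4*l+1 := by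
    intro i
    have : ε i ≤ 4*l+1 := by rcases hε i with ⟨_, h⟩ | ⟨_, _, h⟩ <;> omega
    exact_mod_cast this
  set c : ℝ := (2*(l:ℝ)+2)⁻¹ with hc
  have hc0 : 0 < c := by positivity
  have hc1 : c < 1 := by rw [hc, inv_lt_one_iff₀]; right; linarith
  have hgsum : Summable (fun i : ℕ => (4*(l:ℝ)+1) * c^(n+1) * c^i) :=
    (summable_geometric_of_lt_one hc0.le hc1).mul_left _
  have hle : ∑' i : ℕ, (ε (i + n) : ℝ) / (2 * l + 2) ^ ((i + n) + 1)
      ≤ ∑' i : ℕ, (4*(l:ℝ)+1) * c^(n+1) * c^i := by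
    apply Summable.tsum_le_tsum _ _ hgsum
    · intro i
      rw [div_eq_mul_inv, ← inv_pow, ← hc]
      calc (ε (i + n) : ℝ) * c^(i + n + 1) ≤ (4*(l:ℝ)+1) * c^(i+n+1) := by
            apply mul_le_mul_of_nonneg_right (hbound _) (by positivity)
        _ = (4*(l:ℝ)+1) * c^(n+1) * c^i := by rw [mul_assoc, ← pow_add]; ring_nf
    · apply Summable.of_nonneg_of_le (fun i => by positivity) _ hgsum
      intro i
      rw [div_eq_mul_inv, ← inv_pow, ← hc]
      calc (ε (i + n) : ℝ) * c^(i + n + 1) ≤ (4*(l:ℝ)+1) * c^(i+n+1) := by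
            apply mul_le_mul_of_nonneg_right (hbound _) (by positivity)
        _ = (4*(l:ℝ)+1) * c^(n+1) * c^i := by rw [mul_assoc, ← pow_add]; ring_nf
  have hgeo : ∑' i : ℕ, (4*(l:ℝ)+1) * c^(n+1) * c^i = (4*(l:ℝ)+1) * c^(n+1) * (1-c)⁻¹ := by
    rw [tsum_mul_left, tsum_geometric_of_lt_one hc0.le hc1]
  refine le_trans hle ?_
  rw [hgeo, hc]
  have hbpos : (0:ℝ) < 2*(l:ℝ)+2 := by positivity
  have hl1 : (0:ℝ) < 2*(l:ℝ)+1 := by positivity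
  have e1 : (1 - (2*(l:ℝ)+2)⁻¹) = (2*(l:ℝ)+1)/(2*(l:ℝ)+2) := by field_simp; ring
  rw [e1, inv_div]
  have e2 : (4*(l:ℝ)+1) * ((2*(l:ℝ)+2)⁻¹)^(n+1) * ((2*(l:ℝ)+2)/(2*(l:ℝ)+1))
      = ((4*(l:ℝ)+1) /(2*(l:ℝ)+1)) * ((2*(l:ℝ)+2)^n)⁻¹ := by
    rw [inv_pow]
    field_simp
    ring
  rw [e2, div_eq_mul_inv (2:ℝ)]
  apply mul_le_mul_of_nonneg_right _ (by positivity)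
  rw [div_le_iff₀ hl1]
  linarith

theorem stmt11 (l : ℕ) (hl : 1 ≤ l) : volume (Kl l) ≤ 1 := by
  have key : ∀ n : ℕ, volume (Kl l)
      ≤ ENNReal.ofReal (1 + 2 * ((2*(l:ℝ)+1)/(2*(l:ℝ)+2))^n) := by
    intro n
    set W : Finset ℤ := Vd l n ∪ (Vd l n).image (· + 1) with hW
    have hbpos : (0:ℝ) < 2*(l:ℝ)+2 := by positivity
    have hcov : Kl l ⊆ ⋃ w ∈ W, Set.Icc ((w:ℝ)/(2*(l:ℝ)+2)^n) (((w:ℝ)+1)/(2*(l:ℝ)+2)^n) := by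
      rintro x ⟨ε, hε, hx⟩
      have hsum := summable_aux l ε hε
      have hsplit : (∑ i ∈ range n, (ε i:ℝ)/(2*(l:ℝ)+2)^(i+1))
          + (∑' i : ℕ, (ε (i+n):ℝ)/(2*(l:ℝ)+2)^((i+n)+1))
          = ∑' i : ℕ, (ε i:ℝ)/(2*(l:ℝ)+2)^(i+1) := Summable.sum_add_tsum_nat_add n hsum
      set T := ∑' i : ℕ, (ε (i+n):ℝ)/(2*(l:ℝ)+2)^((i+n)+1) with hTdef
      have hT0 : 0 ≤ T := tsum_nonneg (fun i => by positivity)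
      have hT2 : T ≤ 2/(2*(l:ℝ)+2)^n := tail_bound l hl ε hε n
      have hhead := head_eq l n ε
      set N := ∑ i ∈ range n, (ε i : ℤ) * (2*l+2)^(n-1-i) with hNdef
      have hNV : N ∈ Vd l n := head_mem_Vd l ε hε n
      have hxeq : x = (N:ℝ)/(2*(l:ℝ)+2)^n + T := by
        rw [hx, ← hsplit, hhead]
      by_cases hcase : x ≤ ((N:ℝ)+1)/(2*(l:ℝ)+2)^n
      · refine Set.mem_iUnion₂.2 ⟨N, Finset.mem_union_left _ hNV, ?_, ?_⟩
        · rw [hxeq]; linarith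
        · exact hcase
      · push_neg at hcase
        refine Set.mem_iUnion₂.2 ⟨N+1,
          Finset.mem_union_right _ (Finset.mem_image.2 ⟨N, hNV, rfl⟩), ?_, ?_⟩
        · push_cast
          linarith
        · push_cast
          rw [hxeq]
          have e : ((N:ℝ)+1+1)/(2*(l:ℝ)+2)^n = (N:ℝ)/(2*(l:ℝ)+2)^n + 2/(2*(l:ℝ)+2)^n := by
            ring
          rw [e]
          linarith
    have hIcc : ∀ w : ℤ, volume (Set.Icc ((w:ℝ)/(2*(l:ℝ)+2)^n) (((w:ℝ)+1)/(2*(l:ℝ)+2)^n))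
        = ENNReal.ofReal (1/(2*(l:ℝ)+2)^n) := by
      intro w
      rw [Real.volume_Icc]
      congr 1
      ring
    have hm1 : volume (Kl l) ≤ (W.card : ENNReal) * ENNReal.ofReal (1/(2*(l:ℝ)+2)^n) := by
      refine le_trans (measure_mono hcov) (le_trans (measure_biUnion_finset_le _ _) ?_)
      rw [Finset.sum_congr rfl (fun w _ => hIcc w), Finset.sum_const, nsmul_eq_mul]
    have hcard : W.card ≤ (2*l+2)^n + 2*(2*l+1)^n := by
      have h1 : W = Vd l n ∪ ((Vd l n).image (· + 1) \ Vd l n) := by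
        rw [hW, Finset.union_sdiff_self_eq_union]
      have h2 : ((Vd l n).image (· + 1) \ Vd l n) ⊆ (Pd l n).image (· + 1) := by
        intro z hz
        rw [Finset.mem_sdiff, Finset.mem_image] at hz
        obtain ⟨⟨M, hM, rfl⟩, hz2⟩ := hz
        exact Finset.mem_image.2 ⟨M, Finset.mem_filter.2 ⟨hM, hz2⟩, rfl⟩
      calc W.card ≤ (Vd l n).card + ((Vd l n).image (· + 1) \ Vd l n).card := by
            rw [h1]; exact Finset.card_union_le _ _
        _ ≤ (2*l+2)^n + (Pd l n).card :=
            Nat.add_le_add (card_Vd l n) (le_trans (Finset.card_le_card h2) Finset.card_image_le)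
        _ ≤ (2*l+2)^n + 2*(2*l+1)^n := by
            have := card_PQ l n; omega
    calc volume (Kl l) ≤ (W.card : ENNReal) * ENNReal.ofReal (1/(2*(l:ℝ)+2)^n) := hm1
      _ ≤ (((2*l+2)^n + 2*(2*l+1)^n : ℕ) : ENNReal) * ENNReal.ofReal (1/(2*(l:ℝ)+2)^n) := by
          gcongr
      _ = ENNReal.ofReal ((((2*l+2)^n + 2*(2*l+1)^n : ℕ):ℝ) * (1/(2*(l:ℝ)+2)^n)) := by
          rw [← ENNReal.ofReal_natCast, ← ENNReal.ofReal_mul (by positivity)]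
      _ = ENNReal.ofReal (1 + 2 * ((2*(l:ℝ)+1)/(2*(l:ℝ)+2))^n) := by
          congr 1
          push_cast
          rw [div_pow]
          field_simp
  have hr0 : (0:ℝ) ≤ (2*(l:ℝ)+1)/(2*(l:ℝ)+2) := by positivity
  have hr1 : (2*(l:ℝ)+1)/(2*(l:ℝ)+2) < 1 := by
    rw [div_lt_one (by positivity)]
    linarith
  have htend : Filter.Tendsto (fun n : ℕ => ENNReal.ofReal (1 + 2 * ((2*(l:ℝ)+1)/(2*(l:ℝ)+2))^n))
      Filter.atTop (nhds 1) := by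
    have h1 : Filter.Tendsto (fun n : ℕ => 1 + 2 * ((2*(l:ℝ)+1)/(2*(l:ℝ)+2))^n)
        Filter.atTop (nhds 1) := by
      have h0 := tendsto_pow_atTop_nhds_zero_of_lt_one hr0 hr1
      have h2 := (h0.const_mul (2:ℝ)).const_add (1:ℝ)
      simpa using h2
    have h3 := ENNReal.tendsto_ofReal h1
    simpa using h3
  exact ge_of_tendsto' htend key
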